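/- For all n ≥ 2, with c_k = k^{k-1}/k!, one has ((n-1)/n) · c_n = (1/2) · ∑_{j=1}^{n-1} c_j c_{n-j}. -/

import Mathlib

/-!
With `t k = C(n,k) k^(k-1) (n-k)^(n-k-1)` one has `c j c(n-j) = t j / n!`, so the claim is
`∑_{k=1}^{n-1} t k = 2 (n-1) n^(n-2)`. The substitution `k ↦ n - k` fixes `t`, hence
`n ∑ t k = 2 ∑ (n-k) t k`, and the last sum is `n^n - n^(n-1)` by Abel's identity
`∑_{k=1}^n C(n,k) k^(k-1) (y+n-k)^(n-k) = n (y+n)^(n-1)` at `y = 0`. Abel's identity follows by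
induction on `n`: differentiating either side of the instance `n+1` in `y` gives `n+1` times the
instance `n` at `y+1`, and both sides vanish at `y = -(n+1)`, the left one because the
`(n+1)`-st finite difference of `k ↦ k^n` is zero.
-/

open Nat Finset

theorem sum_range_alternating_choose_mul_pow_eq_zero {R : Type*} [CommRing R] {m n : ℕ}
    (h : m < n) : ∑ k ∈ range (n + 1), (-1 : R) ^ (n - k) * n.choose k * (k : R) ^ m = 0 := by
  have := fwdDiff_iter_eq_sum_shift (1 : R) (fun x ↦ x ^ m) n 0
  rw [fwdDiff_iter_pow_eq_zero_of_lt h] at this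
  simpa [zsmul_eq_mul] using this.symm

noncomputable def abelSum (n : ℕ) (y : ℝ) : ℝ :=
  ∑ k ∈ Icc 1 n, n.choose k * (k : ℝ) ^ (k - 1) * (y + n - k) ^ (n - k)

theorem hasDerivAt_abelSum_succ (n : ℕ) (y : ℝ) :
    HasDerivAt (abelSum (n + 1)) ((n + 1) * abelSum n (y + 1)) y := by
  have hterm : ∀ k ∈ Icc 1 (n + 1), HasDerivAt
      (fun y : ℝ ↦ (n + 1).choose k * (k : ℝ) ^ (k - 1) * (y + ↑(n + 1) - k) ^ (n + 1 - k))
      ((n + 1).choose k * (k : ℝ) ^ (k - 1) * ((n + 1 - k : ℕ) * (y + ↑(n + 1) - k) ^ (n - k)))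
      y := by
    intro k _
    have := (((hasDerivAt_id' y).add_const ((n + 1 : ℕ) : ℝ)).sub_const (k : ℝ)).fun_pow
      (n + 1 - k) |>.const_mul ((n + 1).choose k * (k : ℝ) ^ (k - 1))
    simpa [Nat.sub_sub, add_comm 1 k] using this
  refine (HasDerivAt.fun_sum hterm).congr_deriv ?_
  rw [sum_Icc_succ_top (by omega), abelSum, mul_sum]
  simp only [Nat.sub_self, Nat.cast_zero, zero_mul, mul_zero, add_zero]
  refine sum_congr rfl fun k _ ↦ ?_
  have hchoose : ((n + 1).choose k : ℝ) * (n + 1 - k : ℕ) = (n + 1) * n.choose k := by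
    exact_mod_cast (Nat.choose_mul_succ_eq n k).symm.trans (mul_comm _ _)
  rw [show y + ↑(n + 1) - k = y + 1 + n - k by push_cast; ring]
  linear_combination (k : ℝ) ^ (k - 1) * (y + 1 + n - k) ^ (n - k) * hchoose

theorem abelSum_neg_self {n : ℕ} (hn : 2 ≤ n) : abelSum n (-n) = 0 := by
  have hterm : ∀ k ∈ Icc 1 n, n.choose k * (k : ℝ) ^ (k - 1) * (-n + n - k) ^ (n - k)
      = (-1) ^ (n - k) * n.choose k * (k : ℝ) ^ (n - 1) := by
    intro k hk
    have hkn := mem_Icc.mp hk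
    rw [neg_add_cancel, zero_sub, neg_pow, show n - 1 = (k - 1) + (n - k) by omega, pow_add]
    ring
  have h := sum_range_alternating_choose_mul_pow_eq_zero (R := ℝ) (show n - 1 < n by omega)
  rw [range_eq_Ico, sum_eq_sum_Ico_succ_bot (by omega), Ico_add_one_right_eq_Icc] at h
  rw [abelSum, sum_congr rfl hterm]
  simpa [zero_pow (by omega : n - 1 ≠ 0)] using h

theorem abelSum_eq {n : ℕ} (hn : 1 ≤ n) (y : ℝ) : abelSum n y = n * (y + n) ^ (n - 1) := by
  induction n, hn using Nat.le_induction generalizing y with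
  | base => simp [abelSum]
  | succ n hn ih =>
    have hderiv : ∀ z, HasDerivAt (fun y : ℝ ↦ (n + 1 : ℕ) * (y + (n + 1 : ℕ)) ^ n)
        ((n + 1) * abelSum n (z + 1)) z := by
      intro z
      refine (((hasDerivAt_id' z).add_const ((n + 1 : ℕ) : ℝ)).fun_pow n).const_mul
        ((n + 1 : ℕ) : ℝ) |>.congr_deriv ?_
      rw [ih]
      push_cast
      ring
    have := isOpen_univ.eqOn_of_deriv_eq isPreconnected_univ
      (fun z _ ↦ (hasDerivAt_abelSum_succ n z).differentiableAt.differentiableWithinAt)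
      (fun z _ ↦ (hderiv z).differentiableAt.differentiableWithinAt)
      (fun z _ ↦ (hasDerivAt_abelSum_succ n z).deriv.trans (hderiv z).deriv.symm)
      (Set.mem_univ (-(n + 1 : ℕ) : ℝ))
      (by rw [abelSum_neg_self (by omega)]; simp [zero_pow (by omega : n ≠ 0)])
    simpa using this (Set.mem_univ y)

theorem sum_Icc_choose_mul_pow_mul_pow {n : ℕ} (hn : 1 ≤ n) :
    ∑ k ∈ Icc 1 n, n.choose k * k ^ (k - 1) * (n - k) ^ (n - k) = n ^ n := by
  have h := abelSum_eq hn 0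
  rw [zero_add, mul_pow_sub_one (by omega), abelSum] at h
  rw [← Nat.cast_inj (R := ℝ), Nat.cast_pow, ← h]
  push_cast
  refine sum_congr rfl fun k hk ↦ ?_
  rw [Nat.cast_sub (mem_Icc.mp hk).2, zero_add]

theorem sum_Ico_choose_mul_pow_mul_pow_pred (n : ℕ) :
    ∑ k ∈ Ico 1 n, n.choose k * k ^ (k - 1) * (n - k) ^ (n - k - 1)
      = 2 * (n - 1) * n ^ (n - 2) := by
  rcases lt_or_ge n 2 with hn | hn
  · interval_cases n <;> rfl
  set t : ℕ → ℕ := fun k ↦ n.choose k * k ^ (k - 1) * (n - k) ^ (n - k - 1) with ht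
  have hsymm : ∀ k ≤ n, t (n - k) = t k := by
    intro k hk
    simp only [ht, Nat.choose_symm hk, Nat.sub_sub_self hk]
    ring
  have hreflect : ∑ k ∈ Ico 1 n, k * t k = ∑ k ∈ Ico 1 n, (n - k) * t k := by
    have := sum_Ico_reflect (fun k ↦ k * t k) 1 (show n ≤ n + 1 by omega)
    rw [Nat.add_sub_cancel_left, Nat.add_sub_cancel] at this
    rw [← this]
    refine sum_congr rfl fun k hk ↦ ?_
    rw [hsymm k (mem_Ico.mp hk).2.le]
  have habel : ∑ k ∈ Ico 1 n, (n - k) * t k + n ^ (n - 1) = n ^ n := by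
    rw [← sum_Icc_choose_mul_pow_mul_pow (by omega), ← Ico_add_one_right_eq_Icc,
      sum_Ico_succ_top (by omega)]
    simp only [Nat.choose_self, Nat.sub_self, pow_zero, one_mul, mul_one]
    refine congrArg (· + _) (sum_congr rfl fun k hk ↦ ?_)
    obtain ⟨d, hd⟩ : ∃ d, n - k = d + 1 := ⟨n - k - 1, by have := (mem_Ico.mp hk).2; omega⟩
    simp only [ht, hd, Nat.add_sub_cancel, pow_succ]
    ring
  have hsum : n * ∑ k ∈ Ico 1 n, t k
      = ∑ k ∈ Ico 1 n, k * t k + ∑ k ∈ Ico 1 n, (n - k) * t k := by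
    rw [mul_sum, ← sum_add_distrib]
    refine sum_congr rfl fun k hk ↦ ?_
    rw [← add_mul, Nat.add_sub_cancel' (mem_Ico.mp hk).2.le]
  obtain ⟨m, rfl⟩ := Nat.exists_eq_add_of_le' hn
  apply Nat.eq_of_mul_eq_mul_left (show 0 < m + 2 by omega)
  rw [hreflect] at hsum
  simp only [Nat.add_sub_cancel, show m + 2 - 1 = m + 1 by omega, pow_succ] at habel hsum ⊢
  nlinarith [habel, hsum]

theorem div_factorial_mul_div_factorial {K : Type*} [Field K] [CharZero K] (a b : K) {j n : ℕ}
    (h : j ≤ n) : a / j ! * (b / (n - j)!) = n.choose j * a * b / n ! := by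
  have hfac : ∀ m : ℕ, (m ! : K) ≠ 0 := fun m ↦ Nat.cast_ne_zero.2 (factorial_ne_zero m)
  rw [Nat.cast_choose K h]
  field_simp [hfac]

/-- Convolution identity for the tree-function coefficients `c k = k^{k-1}/k!`:
`((n-1)/n) c_n = (1/2) ∑_{j=1}^{n-1} c_j c_{n-j}` for all `n ≥ 2`. -/
theorem tree_coeff_convolution
    (c : ℕ → ℝ) (hc : ∀ k, c k = (k : ℝ) ^ (k - 1) / (k)!)
    (n : ℕ) (hn : 2 ≤ n) :
    ((n : ℝ) - 1) / (n : ℝ) * c n = (1 / 2) * ∑ j ∈ Finset.Ico 1 n, c j * c (n - j) := by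
  have hterm : ∀ j ∈ Ico 1 n, c j * c (n - j)
      = (n.choose j * j ^ (j - 1) * (n - j) ^ (n - j - 1) : ℕ) / n ! := by
    intro j hj
    rw [hc, hc, div_factorial_mul_div_factorial _ _ (mem_Ico.mp hj).2.le]
    push_cast
    rfl
  rw [sum_congr rfl hterm, ← sum_div, ← Nat.cast_sum, sum_Ico_choose_mul_pow_mul_pow_pred,
    hc n]
  obtain ⟨m, rfl⟩ := Nat.exists_eq_add_of_le' hn
  simp only [Nat.add_sub_cancel, show m + 2 - 1 = m + 1 by omega, pow_succ]
  field_simp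
  push_cast
  ring
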